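/- Let f₀, f be nonnegative functions in L¹(ℝ⁶) with ∫∫ f dv dx = ∫∫ f₀ dv dx = M, with finite kinetic energies, finite Casimir integrals, and with ρ_f, ρ_{f₀} having finite Coulomb energies. Let U₀(x) := −∫ ρ_{f₀}(y)/|x−y| dy, E(x,v) := ½|v|² + U₀(x), let E₀ ∈ ℝ be arbitrary, and suppose all the integrals below are absolutely convergent. Then the following identity holds: ℋ_C(f) − ℋ_C(f₀) = d(f,f₀) − ½ ∫∫ (ρ_f − ρ_{f₀})(x) (ρ_f − ρ_{f₀})(y) / |x−y| dx dy, where d(f,f₀) := ∫∫ [ Q(f(x,v),P(x,v)) − Q(f₀(x,v),P(x,v)) + (E(x,v) − E₀)(f − f₀)(x,v) ] dv dx. (The subtracted double integral equals (1/8π)‖∇U_f − ∇U_{f₀}‖₂², where U_f := −ρ_f ∗ 1/|·|.) -/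

import Mathlib

/-!
Write `D(ρ, σ) = ∬ ρ(x) σ(y) / |x − y|`. Since `U₀` is the potential of `ρ_{f₀}`, Fubini gives
`∫∫ E g = E_kin(g) − D(ρ_g, ρ_{f₀})` for `g = f, f₀`. The `E₀` terms cancel because `f` and `f₀`
have the same mass, and by the symmetry of the Coulomb kernel the remaining Coulomb terms complete
the square `D(ρ_f − ρ_{f₀}, ρ_f − ρ_{f₀}) = D(ρ_f, ρ_f) − 2 D(ρ_f, ρ_{f₀}) + D(ρ_{f₀}, ρ_{f₀})`.
-/

open MeasureTheory Real Filter Topology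

noncomputable section

abbrev E3 := EuclideanSpace ℝ (Fin 3)

def e3 (a b c : ℝ) : E3 := (WithLp.equiv 2 (Fin 3 → ℝ)).symm ![a, b, c]

/-- third component of the angular momentum, P(x,v) = x₁v₂ − x₂v₁ -/
def angmom (z : E3 × E3) : ℝ := z.1 0 * z.2 1 - z.1 1 * z.2 0

/-- induced spatial density ρ_f -/
def rho (f : E3 × E3 → ℝ) (x : E3) : ℝ := ∫ v : E3, f (x, v)

/-- kinetic energy -/
def Ekin (f : E3 × E3 → ℝ) : ℝ := (1/2) * ∫ z : E3 × E3, ‖z.2‖^2 * f z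

/-- potential energy -/
def Epot (f : E3 × E3 → ℝ) : ℝ :=
  -(1/2) * ∫ x : E3, ∫ y : E3, rho f x * rho f y / ‖x - y‖

/-- Casimir functional 𝒞 -/
def Casimir (Q : ℝ → ℝ → ℝ) (f : E3 × E3 → ℝ) : ℝ :=
  ∫ z : E3 × E3, Q (f z) (angmom z)

/-- energy-Casimir functional ℋ_C -/
def HC (Q : ℝ → ℝ → ℝ) (f : E3 × E3 → ℝ) : ℝ := Ekin f + Epot f + Casimir Q f

/-- rotation about the x₃-axis by angle θ -/
def rotZ (θ : ℝ) (x : E3) : E3 :=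
  e3 (Real.cos θ * x 0 - Real.sin θ * x 1) (Real.sin θ * x 0 + Real.cos θ * x 1) (x 2)

/-- axial symmetry: invariance under all rotations about the x₃-axis -/
def AxiSym (f : E3 × E3 → ℝ) : Prop :=
  ∀ (θ : ℝ) (z : E3 × E3), f (rotZ θ z.1, rotZ θ z.2) = f z

/-- membership in the constraint set ℱ_M -/
def MemFM (Q : ℝ → ℝ → ℝ) (M : ℝ) (f : E3 × E3 → ℝ) : Prop :=
  Integrable f ∧ (∀ z, 0 ≤ f z) ∧ (∫ z : E3 × E3, f z) = M ∧
    Integrable (fun z : E3 × E3 => ‖z.2‖^2 * f z) ∧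
    Integrable (fun z : E3 × E3 => Q (f z) (angmom z))

/-- membership in the axially symmetric constraint set ℱ_M^S -/
def MemFMS (Q : ℝ → ℝ → ℝ) (M : ℝ) (f : E3 × E3 → ℝ) : Prop :=
  MemFM Q M f ∧ AxiSym f

/-- h_M = inf of ℋ_C over ℱ_M -/
def hInf (Q : ℝ → ℝ → ℝ) (M : ℝ) : ℝ := sInf (HC Q '' {f | MemFM Q M f})

/-- h_M^S = inf of ℋ_C over ℱ_M^S -/
def hInfS (Q : ℝ → ℝ → ℝ) (M : ℝ) : ℝ := sInf (HC Q '' {f | MemFMS Q M f})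

/-- induced gravitational potential U₀ of a state f₀ -/
def U0 (f0 : E3 × E3 → ℝ) (x : E3) : ℝ := -∫ y : E3, rho f0 y / ‖x - y‖

/-- particle energy E(x,v) = ½|v|² + U₀(x) -/
def Eng (f0 : E3 × E3 → ℝ) (z : E3 × E3) : ℝ := (1/2) * ‖z.2‖^2 + U0 f0 z.1

/-- φ(s,P) = (∂_f Q(·,P))⁻¹(s) for s ≥ 0, and 0 for s < 0 -/
def phi (Qf : ℝ → ℝ → ℝ) (s P : ℝ) : ℝ :=
  if 0 ≤ s then Function.invFunOn (fun t => Qf t P) (Set.Ici 0) s else 0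

section Coulomb

variable {E : Type*} [NormedAddCommGroup E]

def coulombKernel (ρ σ : E → ℝ) (p : E × E) : ℝ := ρ p.1 * σ p.2 / ‖p.1 - p.2‖

lemma coulombKernel_swap (ρ σ : E → ℝ) (p : E × E) :
    coulombKernel σ ρ p.swap = coulombKernel ρ σ p := by
  simp only [coulombKernel, Prod.fst_swap, Prod.snd_swap, norm_sub_rev, mul_comm]

variable [MeasurableSpace E] (μ : Measure E)

def coulombPairing (ρ σ : E → ℝ) : ℝ := ∫ x, ∫ y, ρ x * σ y / ‖x - y‖ ∂μ ∂μ

variable {μ} [SFinite μ] {ρ σ : E → ℝ}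

lemma MeasureTheory.Integrable.coulombKernel_symm
    (h : Integrable (coulombKernel ρ σ) (μ.prod μ)) :
    Integrable (coulombKernel σ ρ) (μ.prod μ) := by
  simpa only [Function.comp_def, coulombKernel_swap] using h.swap

lemma coulombPairing_eq_integral_prod (h : Integrable (coulombKernel ρ σ) (μ.prod μ)) :
    coulombPairing μ ρ σ = ∫ p, coulombKernel ρ σ p ∂μ.prod μ :=
  (integral_prod _ h).symm

lemma coulombPairing_comm (h : Integrable (coulombKernel ρ σ) (μ.prod μ)) :
    coulombPairing μ σ ρ = coulombPairing μ ρ σ := by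
  rw [coulombPairing_eq_integral_prod h, coulombPairing_eq_integral_prod h.coulombKernel_symm,
    ← integral_prod_swap]
  simp only [coulombKernel_swap]

lemma coulombPairing_sub_sub (hρρ : Integrable (coulombKernel ρ ρ) (μ.prod μ))
    (hρσ : Integrable (coulombKernel ρ σ) (μ.prod μ))
    (hσσ : Integrable (coulombKernel σ σ) (μ.prod μ)) :
    coulombPairing μ (ρ - σ) (ρ - σ) =
      coulombPairing μ ρ ρ - 2 * coulombPairing μ ρ σ + coulombPairing μ σ σ := by
  have hσρ := hρσ.coulombKernel_symm
  have hexpand : coulombKernel (ρ - σ) (ρ - σ) =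
      coulombKernel ρ ρ - coulombKernel ρ σ - coulombKernel σ ρ + coulombKernel σ σ := by
    ext p
    simp only [coulombKernel, Pi.sub_apply, Pi.add_apply]
    ring
  have hdiff : Integrable (coulombKernel (ρ - σ) (ρ - σ)) (μ.prod μ) := by
    rw [hexpand]
    exact ((hρρ.sub hρσ).sub hσρ).add hσσ
  rw [coulombPairing_eq_integral_prod hdiff, hexpand, integral_add' ((hρρ.sub hρσ).sub hσρ) hσσ,
    integral_sub' (hρρ.sub hρσ) hσρ, integral_sub' hρρ hρσ, ← coulombPairing_eq_integral_prod hρρ,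
    ← coulombPairing_eq_integral_prod hρσ, ← coulombPairing_eq_integral_prod hσρ,
    ← coulombPairing_eq_integral_prod hσσ, coulombPairing_comm hρσ]
  ring

end Coulomb

lemma Epot_eq_coulombPairing (f : E3 × E3 → ℝ) :
    Epot f = -(1 / 2) * coulombPairing volume (rho f) (rho f) :=
  rfl

lemma integral_U0_mul {f f0 : E3 × E3 → ℝ}
    (h : Integrable (fun z : E3 × E3 => U0 f0 z.1 * f z)) :
    ∫ z : E3 × E3, U0 f0 z.1 * f z = -coulombPairing volume (rho f) (rho f0) := by
  rw [Measure.volume_eq_prod, integral_prod _ h, coulombPairing, ← integral_neg]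
  congr 1 with x
  calc ∫ v, U0 f0 x * f (x, v) = U0 f0 x * rho f x := integral_const_mul _ _
    _ = -∫ y, rho f x * (rho f0 y / ‖x - y‖) := by rw [U0, neg_mul, mul_comm, integral_const_mul]
    _ = -∫ y, rho f x * rho f0 y / ‖x - y‖ := by simp only [mul_div_assoc]

lemma integrable_eng_sub_mul {f0 g : E3 × E3 → ℝ} (E0 : ℝ) (hg : Integrable g)
    (hkin : Integrable (fun z : E3 × E3 => ‖z.2‖ ^ 2 * g z))
    (hU : Integrable (fun z : E3 × E3 => U0 f0 z.1 * g z)) :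
    Integrable (fun z : E3 × E3 => (Eng f0 z - E0) * g z) := by
  refine (((hkin.const_mul (1 / 2)).add hU).sub (hg.const_mul E0)).congr
    (ae_of_all _ fun z => ?_)
  simp only [Eng, Pi.add_apply, Pi.sub_apply]
  ring

lemma integral_eng_sub_mul {f0 g : E3 × E3 → ℝ} (E0 : ℝ) (hg : Integrable g)
    (hkin : Integrable (fun z : E3 × E3 => ‖z.2‖ ^ 2 * g z))
    (hU : Integrable (fun z : E3 × E3 => U0 f0 z.1 * g z)) :
    ∫ z : E3 × E3, (Eng f0 z - E0) * g z =
      Ekin g - coulombPairing volume (rho g) (rho f0) - E0 * ∫ z : E3 × E3, g z := by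
  have hkin' : Integrable (fun z : E3 × E3 => (1 / 2) * (‖z.2‖ ^ 2 * g z)) := hkin.const_mul _
  have hEg : Integrable (fun z : E3 × E3 => E0 * g z) := hg.const_mul _
  have hexpand : (fun z : E3 × E3 => (Eng f0 z - E0) * g z) =
      fun z => (1 / 2) * (‖z.2‖ ^ 2 * g z) + U0 f0 z.1 * g z - E0 * g z := by
    ext z
    simp only [Eng]
    ring
  rw [hexpand, integral_sub _ hEg, integral_add hkin' hU, integral_const_mul,
    integral_const_mul, integral_U0_mul hU, Ekin]
  · ring
  · exact hkin'.add hU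

theorem stmt16_general (Q : ℝ → ℝ → ℝ) (M E0 : ℝ) (f f0 : E3 × E3 → ℝ)
    (hf : Integrable f) (hf0 : Integrable f0)
    (hmass : (∫ z : E3 × E3, f z) = M) (hmass0 : (∫ z : E3 × E3, f0 z) = M)
    (hkin : Integrable (fun z : E3 × E3 => ‖z.2‖^2 * f z))
    (hkin0 : Integrable (fun z : E3 × E3 => ‖z.2‖^2 * f0 z))
    (hcas : Integrable (fun z : E3 × E3 => Q (f z) (angmom z)))
    (hcas0 : Integrable (fun z : E3 × E3 => Q (f0 z) (angmom z)))
    (hcoul : Integrable (fun p : E3 × E3 => rho f p.1 * rho f p.2 / ‖p.1 - p.2‖))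
    (hcoul0 : Integrable (fun p : E3 × E3 => rho f0 p.1 * rho f0 p.2 / ‖p.1 - p.2‖))
    (hcoulx : Integrable (fun p : E3 × E3 => rho f p.1 * rho f0 p.2 / ‖p.1 - p.2‖))
    (hUf : Integrable (fun z : E3 × E3 => U0 f0 z.1 * f z))
    (hUf0 : Integrable (fun z : E3 × E3 => U0 f0 z.1 * f0 z)) :
    HC Q f - HC Q f0 =
      (∫ z : E3 × E3,
        (Q (f z) (angmom z) - Q (f0 z) (angmom z) + (Eng f0 z - E0) * (f z - f0 z)))
      - (1/2) * ∫ x : E3, ∫ y : E3,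
          (rho f x - rho f0 x) * (rho f y - rho f0 y) / ‖x - y‖ := by
  have hEf := integrable_eng_sub_mul E0 hf hkin hUf
  have hEf0 := integrable_eng_sub_mul E0 hf0 hkin0 hUf0
  have hsplit : ∫ z : E3 × E3,
      (Q (f z) (angmom z) - Q (f0 z) (angmom z) + (Eng f0 z - E0) * (f z - f0 z)) =
      Casimir Q f - Casimir Q f0 +
        ((∫ z : E3 × E3, (Eng f0 z - E0) * f z) - ∫ z : E3 × E3, (Eng f0 z - E0) * f0 z) := by
    simp only [mul_sub]
    rw [integral_add _ _, integral_sub hcas hcas0, integral_sub hEf hEf0, Casimir, Casimir]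
    · exact hcas.sub hcas0
    · exact hEf.sub hEf0
  have hsquare : coulombPairing volume (rho f - rho f0) (rho f - rho f0) =
      coulombPairing volume (rho f) (rho f) - 2 * coulombPairing volume (rho f) (rho f0) +
        coulombPairing volume (rho f0) (rho f0) :=
    coulombPairing_sub_sub hcoul hcoulx hcoul0
  change _ = _ - 1 / 2 * coulombPairing volume (rho f - rho f0) (rho f - rho f0)
  rw [hsplit, integral_eng_sub_mul E0 hf hkin hUf, integral_eng_sub_mul E0 hf0 hkin0 hUf0,
    hmass, hmass0, hsquare, HC, HC, Epot_eq_coulombPairing, Epot_eq_coulombPairing]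
  ring

/-- The energy-Casimir identity: ℋ_C(f) − ℋ_C(f₀) = d(f,f₀) − ½∬(ρ_f−ρ_{f₀})(x)(ρ_f−ρ_{f₀})(y)/|x−y|,
where d(f,f₀) = ∫∫ [Q(f,P) − Q(f₀,P) + (E − E₀)(f − f₀)]. -/
theorem stmt16 (Q : ℝ → ℝ → ℝ) (M E0 : ℝ) (f f0 : E3 × E3 → ℝ)
    (hf : Integrable f) (hf0 : Integrable f0)
    (hnn : ∀ z, 0 ≤ f z) (hnn0 : ∀ z, 0 ≤ f0 z)
    (hmass : (∫ z : E3 × E3, f z) = M) (hmass0 : (∫ z : E3 × E3, f0 z) = M)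
    (hkin : Integrable (fun z : E3 × E3 => ‖z.2‖^2 * f z))
    (hkin0 : Integrable (fun z : E3 × E3 => ‖z.2‖^2 * f0 z))
    (hcas : Integrable (fun z : E3 × E3 => Q (f z) (angmom z)))
    (hcas0 : Integrable (fun z : E3 × E3 => Q (f0 z) (angmom z)))
    (hcoul : Integrable (fun p : E3 × E3 => rho f p.1 * rho f p.2 / ‖p.1 - p.2‖))
    (hcoul0 : Integrable (fun p : E3 × E3 => rho f0 p.1 * rho f0 p.2 / ‖p.1 - p.2‖))
    (hcoulx : Integrable (fun p : E3 × E3 => rho f p.1 * rho f0 p.2 / ‖p.1 - p.2‖))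
    (hUf : Integrable (fun z : E3 × E3 => U0 f0 z.1 * f z))
    (hUf0 : Integrable (fun z : E3 × E3 => U0 f0 z.1 * f0 z))
    (hd : Integrable (fun z : E3 × E3 =>
      Q (f z) (angmom z) - Q (f0 z) (angmom z) + (Eng f0 z - E0) * (f z - f0 z))) :
    HC Q f - HC Q f0 =
      (∫ z : E3 × E3,
        (Q (f z) (angmom z) - Q (f0 z) (angmom z) + (Eng f0 z - E0) * (f z - f0 z)))
      - (1/2) * ∫ x : E3, ∫ y : E3,
          (rho f x - rho f0 x) * (rho f y - rho f0 y) / ‖x - y‖ :=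
  stmt16_general Q M E0 f f0 hf hf0 hmass hmass0 hkin hkin0 hcas hcas0 hcoul hcoul0 hcoulx hUf hUf0
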